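/- arXiv:1810.10381 — 5 statements merged into one kernel-verified Lean document; each statement's English description precedes it below -/
import Mathlib

section
/- Let Φ̃ = (φ̃^{(0)}, φ̃^{(1)}, …) be a stationary sequence of random variables in [0,∞) with finite-dimensional distribution functions F̃^{[d]} (with F̃^{[0]} := 1). If for every d ≥ 0 and all t_0, …, t_d ≥ 0 one has F̃^{[d+1]}(t_0, t_1, …, t_d) = (1−θ) F̃^{[d]}(t_1, …, t_d) + θ ∫₀^{t_0} [F̃^{[d]}(t_1,…,t_d) − F̃^{[d+1]}(s, t_1, …, t_d)] ds, where θ ∈ (0,1], then Φ̃ is an iid sequence with each φ̃^{(j)} distributed according to F̃_{(Exp,θ)}(t) = (1−θ) + θ(1 − e^{−θt}). -/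
/-!
Fix the thresholds `t₁, …, t_d` of the last coordinates. The hypothesis is then a linear integral
equation `G(t) = (1 - θ) C + θ ∫₀ᵗ (C - G)` for the monotone function
`G(s) = F̃^{[d+1]}(s, t₁, …, t_d)` with `C = F̃^{[d]}(t₁, …, t_d)`, and its unique solution is
`G(t) = (1 - θ e^{-θ t}) C`. By induction on `d`, the joint distribution function of
`φ̃^{(0)}, …, φ̃^{(d-1)}` is the product of the zero-inflated exponential distribution functions.
Sending the thresholds of the coordinates outside a finite set `S` to infinity gives the same
product formula over `S`, which yields both the marginals and independence.
-/

open MeasureTheory ProbabilityTheory Filter Topology Set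

noncomputable def zeroInflatedExpCDF (θ t : ℝ) : ℝ :=
  (1 - θ) + θ * (1 - Real.exp (-θ * t))

lemma tendsto_zeroInflatedExpCDF_atTop {θ : ℝ} (hθ : 0 < θ) :
    Tendsto (zeroInflatedExpCDF θ) atTop (𝓝 1) := by
  have hexp : Tendsto (fun t => Real.exp (-θ * t)) atTop (𝓝 0) :=
    Real.tendsto_exp_atBot.comp (tendsto_id.const_mul_atTop_of_neg (neg_lt_zero.mpr hθ))
  unfold zeroInflatedExpCDF
  simpa using (tendsto_const_nhds (x := 1 - θ)).add ((hexp.const_sub 1).const_mul θ)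

lemma eq_add_mul_exp_of_hasDerivWithinAt {g : ℝ → ℝ} {θ C : ℝ} (hg : ContinuousOn g (Ici 0))
    (hderiv : ∀ x, 0 ≤ x → HasDerivWithinAt g (θ * (C - g x)) (Ici x) x) {t : ℝ} (ht : 0 ≤ t) :
    g t = C + (g 0 - C) * Real.exp (-θ * t) := by
  set f : ℝ → ℝ := fun s => Real.exp (θ * s) * (g s - C)
  have hf : ∀ x, 0 ≤ x → HasDerivWithinAt f 0 (Ici x) x := by
    intro x hx
    have hexp : HasDerivWithinAt (fun s => Real.exp (θ * s)) (Real.exp (θ * x) * θ) (Ici x) x := by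
      simpa using ((hasDerivWithinAt_id x (Ici x)).const_mul θ).exp
    exact (hexp.mul ((hderiv x hx).sub_const C)).congr_deriv (by ring)
  have hconst : f t = f 0 :=
    constant_of_has_deriv_right_zero
      ((Real.continuous_exp.comp (continuous_const_mul θ)).continuousOn.mul
        ((hg.mono Icc_subset_Ici_self).sub continuousOn_const))
      (fun x hx => hf x hx.1) t ⟨ht, le_rfl⟩
  simp only [f, mul_zero, Real.exp_zero, one_mul] at hconst
  rw [neg_mul, Real.exp_neg, ← hconst]
  field_simp
  ring

lemma eq_add_mul_exp_of_eq_add_integral {G : ℝ → ℝ} (hG : Monotone G) {θ A C : ℝ}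
    (h : ∀ t, 0 ≤ t → G t = A + θ * ∫ s in (0 : ℝ)..t, (C - G s)) {t : ℝ} (ht : 0 ≤ t) :
    G t = C + (A - C) * Real.exp (-θ * t) := by
  have hint : ∀ a b, IntervalIntegrable (fun s => C - G s) volume a b :=
    fun a b => intervalIntegrable_const.sub hG.intervalIntegrable
  set g : ℝ → ℝ := fun t => A + θ * ∫ s in (0 : ℝ)..t, (C - G s)
  have hg : Continuous g := continuous_const.add
    (continuous_const.mul (intervalIntegral.continuous_primitive hint 0))
  have hGg : EqOn G g (Ici 0) := h
  have hderiv : ∀ x, 0 ≤ x → HasDerivWithinAt g (θ * (C - g x)) (Ici x) x := by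
    intro x hx
    have hcont : ContinuousWithinAt (fun s => C - G s) (Ioi x) x :=
      continuousWithinAt_const.sub <| (hg.continuousWithinAt.congr
        (fun y hy => hGg (hx.trans hy.le)) (hGg hx))
    rw [← hGg hx]
    exact ((intervalIntegral.integral_hasDerivWithinAt_right (hint 0 x)
      (hG.measurable.const_sub C).stronglyMeasurable.stronglyMeasurableAtFilter hcont).const_mul
        θ).const_add A
  have hg0 : g 0 = A := by simp [g]
  rw [hGg ht, eq_add_mul_exp_of_hasDerivWithinAt hg.continuousOn hderiv ht, hg0]

section

variable {Ω : Type*} [MeasurableSpace Ω] {μ : Measure Ω}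

lemma iIndepFun_of_measure_biInter_le {ι : Type*} {X : ι → Ω → ℝ} (hmeas : ∀ i, Measurable (X i))
    (h : ∀ (S : Finset ι) (t : ι → ℝ),
      μ (⋂ i ∈ S, {ω | X i ω ≤ t i}) = ∏ i ∈ S, μ {ω | X i ω ≤ t i}) :
    iIndepFun X μ := by
  rw [iIndepFun_iff_iIndep]
  refine iIndepSets.iIndep (fun i => (hmeas i).comap_le) (fun i => preimage (X i) '' range Iic)
    (fun i => isPiSystem_Iic.comap (X i)) (fun i => ?_) ?_
  · rw [← MeasurableSpace.comap_generateFrom, ← borel_eq_generateFrom_Iic,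
      ← BorelSpace.measurable_eq]
  · rw [iIndepSets_iff]
    intro S f hf
    have hIic : ∀ i ∈ S, ∃ r, {ω | X i ω ≤ r} = f i := fun i hi => by
      obtain ⟨_, ⟨r, rfl⟩, hr⟩ := hf i hi
      exact ⟨r, hr⟩
    choose! r hr using hIic
    rw [← iInter₂_congr hr, ← Finset.prod_congr rfl fun i hi => congrArg μ (hr i hi)]
    exact h S r

lemma measure_biInter_le_eq_prod_of_nonneg [IsFiniteMeasure μ] {ι : Type*} {X : ι → Ω → ℝ}
    (hnn : ∀ i ω, 0 ≤ X i ω)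
    (h : ∀ (S : Finset ι) (t : ι → ℝ), (∀ i ∈ S, 0 ≤ t i) →
      (μ (⋂ i ∈ S, {ω | X i ω ≤ t i})).toReal = ∏ i ∈ S, (μ {ω | X i ω ≤ t i}).toReal)
    (S : Finset ι) (t : ι → ℝ) :
    μ (⋂ i ∈ S, {ω | X i ω ≤ t i}) = ∏ i ∈ S, μ {ω | X i ω ≤ t i} := by
  by_cases ht : ∀ i ∈ S, 0 ≤ t i
  · rw [← ENNReal.toReal_eq_toReal_iff' (measure_ne_top μ _)
      (ENNReal.prod_ne_top fun i _ => measure_ne_top μ _), ENNReal.toReal_prod]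
    exact h S t ht
  · obtain ⟨i, hi, hti⟩ : ∃ i ∈ S, t i < 0 := by simpa using ht
    have hempty : {ω | X i ω ≤ t i} = ∅ :=
      eq_empty_of_forall_notMem fun ω hω => (hti.trans_le (hnn i ω)).not_ge hω
    rw [Finset.prod_eq_zero hi (by rw [hempty, measure_empty])]
    exact measure_mono_null (biInter_subset_of_mem hi) (by rw [hempty, measure_empty])

lemma toReal_measure_forall_fin_le_eq_prod [IsProbabilityMeasure μ] {X : ℕ → Ω → ℝ} {θ : ℝ}
    (heq : ∀ (d : ℕ) (t0 : ℝ) (t : Fin d → ℝ), 0 ≤ t0 → (∀ i, 0 ≤ t i) →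
      (μ {ω | X 0 ω ≤ t0 ∧ ∀ i : Fin d, X (i.val + 1) ω ≤ t i}).toReal
        = (1 - θ) * (μ {ω | ∀ i : Fin d, X i.val ω ≤ t i}).toReal
          + θ * ∫ s in (0 : ℝ)..t0,
              ((μ {ω | ∀ i : Fin d, X i.val ω ≤ t i}).toReal
                - (μ {ω | X 0 ω ≤ s ∧ ∀ i : Fin d, X (i.val + 1) ω ≤ t i}).toReal))
    (d : ℕ) (t : Fin d → ℝ) (ht : ∀ i, 0 ≤ t i) :
    (μ {ω | ∀ i : Fin d, X i.val ω ≤ t i}).toReal = ∏ i, zeroInflatedExpCDF θ (t i) := by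
  induction d with
  | zero => simp
  | succ d ih =>
    have hmono : Monotone fun s =>
        (μ {ω | X 0 ω ≤ s ∧ ∀ i : Fin d, X (i.val + 1) ω ≤ t i.succ}).toReal :=
      fun a b hab => ENNReal.toReal_mono (measure_ne_top μ _)
        (measure_mono fun ω hω => ⟨hω.1.trans hab, hω.2⟩)
    have hsolve := eq_add_mul_exp_of_eq_add_integral hmono
      (fun s hs => heq d s (fun i => t i.succ) hs fun i => ht i.succ) (ht 0)
    simp only [Fin.forall_fin_succ, Fin.val_zero, Fin.val_succ] at hsolve ⊢
    rw [hsolve, ih (fun i => t i.succ) (fun i => ht i.succ), Fin.prod_univ_succ,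
      zeroInflatedExpCDF]
    ring

lemma toReal_measure_biInter_le_eq_prod [IsFiniteMeasure μ] {X : ℕ → Ω → ℝ} {F : ℝ → ℝ}
    (hF : Tendsto F atTop (𝓝 1))
    (hinit : ∀ (d : ℕ) (t : Fin d → ℝ), (∀ i, 0 ≤ t i) →
      (μ {ω | ∀ i : Fin d, X i.val ω ≤ t i}).toReal = ∏ i, F (t i))
    (S : Finset ℕ) (t : ℕ → ℝ) (ht : ∀ i ∈ S, 0 ≤ t i) :
    (μ (⋂ i ∈ S, {ω | X i ω ≤ t i})).toReal = ∏ i ∈ S, F (t i) := by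
  classical
  obtain ⟨N, hSN⟩ := S.exists_nat_subset_range
  set u : ℕ → Fin N → ℝ := fun n i => if i.val ∈ S then t i else n
  have hu : ∀ n i, 0 ≤ u n i := fun n i => by
    by_cases hi : i.val ∈ S <;> simp [u, hi, ht]
  have hmono : Monotone fun n => {ω | ∀ i : Fin N, X i.val ω ≤ u n i} := by
    intro a b hab ω hω i
    refine (hω i).trans ?_
    by_cases hi : i.val ∈ S <;> simp [u, hi, hab]
  have hunion : (⋃ n, {ω | ∀ i : Fin N, X i.val ω ≤ u n i}) = ⋂ i ∈ S, {ω | X i ω ≤ t i} := by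
    ext ω
    simp only [mem_iUnion, mem_iInter, mem_ofPred_eq]
    constructor
    · rintro ⟨n, hn⟩ i hi
      simpa [u, hi] using hn ⟨i, Finset.mem_range.mp (hSN hi)⟩
    · intro h
      obtain ⟨n, hn⟩ := (eventually_all.2 fun i : Fin N =>
        tendsto_natCast_atTop_atTop.eventually_ge_atTop (X i.val ω)).exists
      refine ⟨n, fun i => ?_⟩
      by_cases hi : i.val ∈ S
      · simpa [u, hi] using h i hi
      · simpa [u, hi] using hn i
  have hlim : Tendsto (fun n => ∏ i : Fin N, F (u n i)) atTop
      (𝓝 (∏ i : Fin N, if i.val ∈ S then F (t i) else 1)) :=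
    tendsto_finsetProd _ fun i _ => by
      by_cases hi : i.val ∈ S
      · simp only [u, hi, if_true]
        exact tendsto_const_nhds
      · simp only [u, hi, if_false]
        exact hF.comp tendsto_natCast_atTop_atTop
  have hlimS : (∏ i : Fin N, if i.val ∈ S then F (t i) else 1) = ∏ i ∈ S, F (t i) := by
    rw [Fin.prod_univ_eq_prod_range (fun i => if i ∈ S then F (t i) else 1), Finset.prod_ite_mem,
      Finset.inter_eq_right.mpr hSN]
  rw [← hlimS, ← hunion]
  refine tendsto_nhds_unique ((ENNReal.tendsto_toReal (measure_ne_top μ _)).comp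
    (tendsto_measure_iUnion_atTop hmono)) ?_
  simpa only [Function.comp_def, hinit N _ (hu _)] using hlim

end

theorem stmt8_general {Ω : Type*} [MeasurableSpace Ω] (μ : Measure Ω) [IsProbabilityMeasure μ]
    (θ : ℝ) (hθ : θ ∈ Set.Ioc (0 : ℝ) 1)
    (Φ : ℕ → Ω → ℝ) (hmeas : ∀ j, Measurable (Φ j)) (hnn : ∀ j ω, 0 ≤ Φ j ω)
    (heq : ∀ (d : ℕ) (t0 : ℝ) (t : Fin d → ℝ), 0 ≤ t0 → (∀ i, 0 ≤ t i) →
      (μ {ω | Φ 0 ω ≤ t0 ∧ ∀ i : Fin d, Φ (i.val + 1) ω ≤ t i}).toReal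
        = (1 - θ) * (μ {ω | ∀ i : Fin d, Φ i.val ω ≤ t i}).toReal
          + θ * ∫ s in (0 : ℝ)..t0,
              ((μ {ω | ∀ i : Fin d, Φ i.val ω ≤ t i}).toReal
                - (μ {ω | Φ 0 ω ≤ s ∧ ∀ i : Fin d, Φ (i.val + 1) ω ≤ t i}).toReal)) :
    (∀ (j : ℕ) (t : ℝ), 0 ≤ t →
        (μ {ω | Φ j ω ≤ t}).toReal = (1 - θ) + θ * (1 - Real.exp (-θ * t))) ∧
      iIndepFun Φ μ := by
  have hjoint := toReal_measure_biInter_le_eq_prod (tendsto_zeroInflatedExpCDF_atTop hθ.1)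
    (toReal_measure_forall_fin_le_eq_prod heq)
  have hmarg : ∀ j t, 0 ≤ t → (μ {ω | Φ j ω ≤ t}).toReal = zeroInflatedExpCDF θ t :=
    fun j t ht => by simpa using hjoint {j} (fun _ => t) (by simpa using ht)
  refine ⟨hmarg, iIndepFun_of_measure_biInter_le hmeas
    (measure_biInter_le_eq_prod_of_nonneg hnn fun S t ht => ?_)⟩
  rw [hjoint S t ht]
  exact Finset.prod_congr rfl fun i hi => (hmarg i (t i) (ht i hi)).symm

/-- If a stationary sequence `Φ̃` of `[0,∞)`-valued random variables has finite-dimensional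
distribution functions satisfying
`F̃^{[d+1]}(t₀,t₁,…,t_d) = (1-θ)F̃^{[d]}(t₁,…,t_d)
  + θ ∫₀^{t₀} (F̃^{[d]}(t₁,…,t_d) - F̃^{[d+1]}(s,t₁,…,t_d)) ds`
for some `θ ∈ (0,1]`, then `Φ̃` is iid with marginal distribution function
`F̃_{(Exp,θ)}(t) = (1-θ) + θ(1 - e^{-θt})`. -/
theorem stmt8 {Ω : Type*} [MeasurableSpace Ω] (μ : Measure Ω) [IsProbabilityMeasure μ]
    (θ : ℝ) (hθ : θ ∈ Set.Ioc (0 : ℝ) 1)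
    (Φ : ℕ → Ω → ℝ) (hmeas : ∀ j, Measurable (Φ j)) (hnn : ∀ j ω, 0 ≤ Φ j ω)
    (hstat : ∀ (k d : ℕ) (t : Fin d → ℝ),
      μ {ω | ∀ i : Fin d, Φ (k + i.val) ω ≤ t i} = μ {ω | ∀ i : Fin d, Φ i.val ω ≤ t i})
    (heq : ∀ (d : ℕ) (t0 : ℝ) (t : Fin d → ℝ), 0 ≤ t0 → (∀ i, 0 ≤ t i) →
      (μ {ω | Φ 0 ω ≤ t0 ∧ ∀ i : Fin d, Φ (i.val + 1) ω ≤ t i}).toReal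
        = (1 - θ) * (μ {ω | ∀ i : Fin d, Φ i.val ω ≤ t i}).toReal
          + θ * ∫ s in (0 : ℝ)..t0,
              ((μ {ω | ∀ i : Fin d, Φ i.val ω ≤ t i}).toReal
                - (μ {ω | Φ 0 ω ≤ s ∧ ∀ i : Fin d, Φ (i.val + 1) ω ≤ t i}).toReal)) :
    (∀ (j : ℕ) (t : ℝ), 0 ≤ t →
        (μ {ω | Φ j ω ≤ t}).toReal = (1 - θ) + θ * (1 - Real.exp (-θ * t))) ∧
      iIndepFun Φ μ :=
  stmt8_general μ θ hθ Φ hmeas hnn heq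
end

section
/- Let Φ be a stationary random sequence in [0,∞) whose finite-dimensional distribution functions satisfy F^{[d+1]}(t_0, t_1, …, t_d) = ∫₀^{t_0} [F^{[d]}(t_1,…,t_d) − F^{[d+1]}(s, t_1, …, t_d)] ds for all d ≥ 0 and t_j ≥ 0 (with F^{[0]} := 1). Then Φ is an iid sequence of standard exponentially distributed random variables. -/
open MeasureTheory ProbabilityTheory Filter Topology Set

/-!
By induction on `d`, the distribution function of `(Φ 0, …, Φ (d-1))` is
`∏ i, (1 - exp (-tᵢ))`. Indeed, with `t₁, …, t_d` fixed and `C = F^{[d]}(t₁, …, t_d)`, the function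
`G = F^{[d+1]}(·, t₁, …, t_d)` is monotone and solves `G t = ∫₀ᵗ (C - G)`; a monotone function is
locally integrable, so `G` is continuous, hence `G' = C - G` with `G 0 = 0`, and
`G t = C (1 - exp (-t))`. Sending the thresholds of the indices outside a finite set `S` to `∞`
gives the same product formula for `(Φ i)_{i ∈ S}`; in particular every `Φ i` is standard
exponential, and independence follows because the sets `{Φ i ≤ r}` form generating π-systems.
-/

theorem Monotone.eq_mul_one_sub_exp_neg_of_eq_integral {G : ℝ → ℝ} (hG : Monotone G) {C : ℝ}
    (h : ∀ t, 0 ≤ t → G t = ∫ s in (0 : ℝ)..t, (C - G s)) {t : ℝ} (ht : 0 ≤ t) :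
    G t = C * (1 - Real.exp (-t)) := by
  have hint : ∀ a b : ℝ, IntervalIntegrable (fun s => C - G s) volume a b :=
    fun a b => intervalIntegrable_const.sub hG.intervalIntegrable
  have hcont : ContinuousOn G (Ici 0) :=
    (intervalIntegral.continuous_primitive hint 0).continuousOn.congr h
  have hG' : ∀ x ∈ Ici (0 : ℝ), HasDerivWithinAt G (C - G x) (Ici x) x := by
    intro x hx
    refine (intervalIntegral.integral_hasDerivWithinAt_right (hint 0 x) ?_ ?_).congr_of_mem
      (fun y hy => h y (le_trans hx hy)) self_mem_Ici
    · exact (measurable_const.sub hG.measurable).stronglyMeasurable.stronglyMeasurableAtFilter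
    · exact ((continuousOn_const.sub hcont) x hx).mono (Ioi_subset_Ici hx)
  set u : ℝ → ℝ := fun s => (G s - C) * Real.exp s
  have hu' : ∀ x ∈ Ico 0 t, HasDerivWithinAt u 0 (Ici x) x := by
    intro x hx
    have hux : HasDerivWithinAt u ((C - G x) * Real.exp x + (G x - C) * Real.exp x) (Ici x) x :=
      ((hG' x hx.1).sub_const C).mul (Real.hasDerivAt_exp x).hasDerivWithinAt
    rwa [← add_mul, sub_add_sub_cancel', sub_self, zero_mul] at hux
  have hu : ContinuousOn u (Icc 0 t) :=
    ((hcont.mono Icc_subset_Ici_self).sub continuousOn_const).mul Real.continuous_exp.continuousOn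
  have hG0 : G 0 = 0 := by simpa using h 0 le_rfl
  have hut : (G t - C) * Real.exp t = (G 0 - C) * Real.exp 0 :=
    constant_of_has_deriv_right_zero hu hu' t ⟨ht, le_rfl⟩
  rw [hG0, Real.exp_zero] at hut
  rw [Real.exp_neg]
  field_simp
  linarith

section

variable {Ω ι : Type*} [MeasurableSpace Ω] {μ : Measure Ω}

theorem measure_forall_fin_le_toReal_eq_prod_of_eq_integral [IsProbabilityMeasure μ]
    {Φ : ℕ → Ω → ℝ}
    (heq : ∀ (d : ℕ) (t0 : ℝ) (t : Fin d → ℝ), 0 ≤ t0 → (∀ i, 0 ≤ t i) →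
      (μ {ω | Φ 0 ω ≤ t0 ∧ ∀ i : Fin d, Φ (i.val + 1) ω ≤ t i}).toReal
        = ∫ s in (0 : ℝ)..t0,
            ((μ {ω | ∀ i : Fin d, Φ i.val ω ≤ t i}).toReal
              - (μ {ω | Φ 0 ω ≤ s ∧ ∀ i : Fin d, Φ (i.val + 1) ω ≤ t i}).toReal))
    (d : ℕ) (t : Fin d → ℝ) (ht : ∀ i, 0 ≤ t i) :
    (μ {ω | ∀ i : Fin d, Φ i.val ω ≤ t i}).toReal = ∏ i, (1 - Real.exp (-t i)) := by
  induction d with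
  | zero => simp
  | succ d ih =>
    have hmono : Monotone fun s =>
        (μ {ω | Φ 0 ω ≤ s ∧ ∀ i : Fin d, Φ (i.val + 1) ω ≤ t i.succ}).toReal :=
      fun a b hab => ENNReal.toReal_mono (measure_ne_top μ _)
        (measure_mono fun ω hω => ⟨hω.1.trans hab, hω.2⟩)
    have h0 := hmono.eq_mul_one_sub_exp_neg_of_eq_integral
      (C := ∏ i : Fin d, (1 - Real.exp (-t i.succ)))
      (fun s hs => by rw [heq d s _ hs fun i => ht i.succ, ih _ fun i => ht i.succ]) (ht 0)
    simp only [Fin.forall_fin_succ, Fin.val_zero, Fin.val_succ, Fin.prod_univ_succ]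
    rw [h0, mul_comm]

theorem measure_biInter_Iic_toReal_eq_prod_of_initial_blocks [IsFiniteMeasure μ] {X : ℕ → Ω → ℝ}
    {F : ℝ → ℝ} (hF : Tendsto F atTop (𝓝 1))
    (hblock : ∀ (n : ℕ) (t : Fin n → ℝ), (∀ i, 0 ≤ t i) →
      (μ {ω | ∀ i : Fin n, X i ω ≤ t i}).toReal = ∏ i, F (t i))
    (S : Finset ℕ) {τ : ℕ → ℝ} (hτ : ∀ i ∈ S, 0 ≤ τ i) :
    (μ (⋂ i ∈ S, X i ⁻¹' Iic (τ i))).toReal = ∏ i ∈ S, F (τ i) := by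
  obtain ⟨n, hSn⟩ := S.exists_nat_subset_range
  set T : ℝ → Fin n → ℝ := fun M j => if (j : ℕ) ∈ S then τ j else M
  set A : ℝ → Set Ω := fun M => {ω | ∀ j : Fin n, X j ω ≤ T M j}
  have hA : Monotone A := by
    intro M M' hMM' ω hω j
    by_cases hj : (j : ℕ) ∈ S
    · simpa [T, hj] using hω j
    · simpa [T, hj] using (hω j).trans (by simp [T, hj, hMM'])
  have hAunion : ⋃ M, A M = ⋂ i ∈ S, X i ⁻¹' Iic (τ i) := by
    ext ω
    simp only [mem_iUnion, mem_iInter₂, mem_preimage, mem_Iic]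
    constructor
    · rintro ⟨M, hM⟩ i hi
      simpa [T, hi] using hM ⟨i, Finset.mem_range.1 (hSn hi)⟩
    · intro hω
      obtain ⟨M, hM⟩ := (Set.finite_range fun j : Fin n => X j ω).bddAbove
      refine ⟨M, fun j => ?_⟩
      by_cases hj : (j : ℕ) ∈ S
      · simpa [T, hj] using hω j hj
      · simpa [T, hj] using hM (mem_range_self (f := fun j : Fin n => X j ω) j)
  have hlim_measure : Tendsto (fun M => (μ (A M)).toReal) atTop
      (𝓝 (μ (⋂ i ∈ S, X i ⁻¹' Iic (τ i))).toReal) := by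
    rw [← hAunion]
    exact (ENNReal.tendsto_toReal (measure_ne_top μ _)).comp (tendsto_measure_iUnion_atTop hA)
  have hlim_prod : Tendsto (fun M => ∏ j, F (T M j)) atTop (𝓝 (∏ i ∈ S, F (τ i))) := by
    have hfactor : ∀ j : Fin n, Tendsto (fun M => F (T M j)) atTop
        (𝓝 (if (j : ℕ) ∈ S then F (τ j) else 1)) := by
      intro j
      by_cases hj : (j : ℕ) ∈ S
      · simp [T, hj]
      · simpa [T, hj] using hF
    convert tendsto_finsetProd _ fun j _ => hfactor j using 2
    rw [Fin.prod_univ_eq_prod_range (fun i => if i ∈ S then F (τ i) else 1),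
      Finset.prod_ite_mem, Finset.inter_eq_right.2 hSn]
  refine tendsto_nhds_unique (hlim_measure.congr' ?_) hlim_prod
  filter_upwards [eventually_ge_atTop 0] with M hM
  refine hblock n (T M) fun j => ?_
  by_cases hj : (j : ℕ) ∈ S
  · simpa [T, hj] using hτ j hj
  · simpa [T, hj] using hM

theorem iIndepFun_of_measure_biInter_Iic {X : ι → Ω → ℝ} (hX : ∀ i, Measurable (X i))
    (h : ∀ (S : Finset ι) (τ : ι → ℝ),
      μ (⋂ i ∈ S, X i ⁻¹' Iic (τ i)) = ∏ i ∈ S, μ (X i ⁻¹' Iic (τ i))) :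
    iIndepFun X μ := by
  rw [iIndepFun_iff_iIndep]
  refine iIndepSets.iIndep (fun i => (hX i).comap_le) (fun i => preimage (X i) '' range Iic)
    (fun i => isPiSystem_Iic.comap (X i)) (fun i => ?_) ?_
  · rw [← MeasurableSpace.comap_generateFrom, ← borel_eq_generateFrom_Iic]
    exact congrArg _ BorelSpace.measurable_eq
  · rw [iIndepSets_iff]
    intro S f hf
    have hf' : ∀ i ∈ S, ∃ r, f i = X i ⁻¹' Iic r := by
      intro i hi
      obtain ⟨_, ⟨r, rfl⟩, hr⟩ := hf i hi
      exact ⟨r, hr.symm⟩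
    choose! τ hτ using hf'
    rw [iInter₂_congr hτ, Finset.prod_congr rfl fun i hi => congrArg μ (hτ i hi)]
    exact h S τ

theorem measure_biInter_Iic_eq_prod_of_nonneg [IsFiniteMeasure μ] {X : ι → Ω → ℝ}
    (hnull : ∀ i, μ (X i ⁻¹' Iic 0) = 0)
    (h : ∀ (S : Finset ι) (τ : ι → ℝ), (∀ i ∈ S, 0 ≤ τ i) →
      (μ (⋂ i ∈ S, X i ⁻¹' Iic (τ i))).toReal = ∏ i ∈ S, (μ (X i ⁻¹' Iic (τ i))).toReal)
    (S : Finset ι) (τ : ι → ℝ) :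
    μ (⋂ i ∈ S, X i ⁻¹' Iic (τ i)) = ∏ i ∈ S, μ (X i ⁻¹' Iic (τ i)) := by
  by_cases hτ : ∀ i ∈ S, 0 ≤ τ i
  · rw [← ENNReal.toReal_eq_toReal_iff' (measure_ne_top μ _)
      (ENNReal.prod_ne_top fun i _ => measure_ne_top μ _), ENNReal.toReal_prod, h S τ hτ]
  obtain ⟨i, hi, hτi⟩ : ∃ i ∈ S, τ i < 0 := by simpa using hτ
  have hnull_i : μ (X i ⁻¹' Iic (τ i)) = 0 :=
    measure_mono_null (preimage_mono (Iic_subset_Iic.2 hτi.le)) (hnull i)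
  rw [Finset.prod_eq_zero hi hnull_i]
  exact measure_mono_null (biInter_subset_of_mem hi) hnull_i

end

theorem stmt9_general {Ω : Type*} [MeasurableSpace Ω] (μ : Measure Ω) [IsProbabilityMeasure μ]
    (Φ : ℕ → Ω → ℝ) (hmeas : ∀ j, Measurable (Φ j))
    (heq : ∀ (d : ℕ) (t0 : ℝ) (t : Fin d → ℝ), 0 ≤ t0 → (∀ i, 0 ≤ t i) →
      (μ {ω | Φ 0 ω ≤ t0 ∧ ∀ i : Fin d, Φ (i.val + 1) ω ≤ t i}).toReal
        = ∫ s in (0 : ℝ)..t0,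
            ((μ {ω | ∀ i : Fin d, Φ i.val ω ≤ t i}).toReal
              - (μ {ω | Φ 0 ω ≤ s ∧ ∀ i : Fin d, Φ (i.val + 1) ω ≤ t i}).toReal)) :
    (∀ (j : ℕ) (t : ℝ), 0 ≤ t →
        (μ {ω | Φ j ω ≤ t}).toReal = 1 - Real.exp (-t)) ∧
      iIndepFun (m := fun _ : ℕ => (inferInstance : MeasurableSpace ℝ)) Φ μ := by
  have hjoint : ∀ (S : Finset ℕ) (τ : ℕ → ℝ), (∀ i ∈ S, 0 ≤ τ i) →
      (μ (⋂ i ∈ S, Φ i ⁻¹' Iic (τ i))).toReal = ∏ i ∈ S, (1 - Real.exp (-τ i)) :=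
    fun S τ hτ => measure_biInter_Iic_toReal_eq_prod_of_initial_blocks
      (by simpa using tendsto_const_nhds.sub Real.tendsto_exp_neg_atTop_nhds_zero)
      (measure_forall_fin_le_toReal_eq_prod_of_eq_integral heq) S hτ
  have hmarg : ∀ (j : ℕ) (t : ℝ), 0 ≤ t → (μ {ω | Φ j ω ≤ t}).toReal = 1 - Real.exp (-t) :=
    fun j t ht => by
      have h := hjoint {j} (fun _ => t) (by simpa using ht)
      rwa [Finset.set_biInter_singleton, Finset.prod_singleton] at h
  refine ⟨hmarg, iIndepFun_of_measure_biInter_Iic hmeas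
    (measure_biInter_Iic_eq_prod_of_nonneg (fun j => ?_) fun S τ hτ => ?_)⟩
  · have h0 := hmarg j 0 le_rfl
    rw [neg_zero, Real.exp_zero, sub_self, ENNReal.toReal_eq_zero_iff] at h0
    exact h0.resolve_right (measure_ne_top μ _)
  · rw [hjoint S τ hτ]
    exact Finset.prod_congr rfl fun i hi => (hmarg i (τ i) (hτ i hi)).symm

/-- A stationary random sequence `Φ` in `[0,∞)` whose finite-dimensional distribution
functions satisfy
`F^{[d+1]}(t₀,t₁,…,t_d) = ∫₀^{t₀} (F^{[d]}(t₁,…,t_d) - F^{[d+1]}(s,t₁,…,t_d)) ds`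
for all `d ≥ 0` and `t_j ≥ 0` is an iid sequence of standard exponentially distributed
random variables. -/
theorem stmt9 {Ω : Type*} [MeasurableSpace Ω] (μ : Measure Ω) [IsProbabilityMeasure μ]
    (Φ : ℕ → Ω → ℝ) (hmeas : ∀ j, Measurable (Φ j)) (hnn : ∀ j ω, 0 ≤ Φ j ω)
    (hstat : ∀ (k d : ℕ) (t : Fin d → ℝ),
      μ {ω | ∀ i : Fin d, Φ (k + i.val) ω ≤ t i} = μ {ω | ∀ i : Fin d, Φ i.val ω ≤ t i})
    (heq : ∀ (d : ℕ) (t0 : ℝ) (t : Fin d → ℝ), 0 ≤ t0 → (∀ i, 0 ≤ t i) →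
      (μ {ω | Φ 0 ω ≤ t0 ∧ ∀ i : Fin d, Φ (i.val + 1) ω ≤ t i}).toReal
        = ∫ s in (0 : ℝ)..t0,
            ((μ {ω | ∀ i : Fin d, Φ i.val ω ≤ t i}).toReal
              - (μ {ω | Φ 0 ω ≤ s ∧ ∀ i : Fin d, Φ (i.val + 1) ω ≤ t i}).toReal)) :
    (∀ (j : ℕ) (t : ℝ), 0 ≤ t →
        (μ {ω | Φ j ω ≤ t}).toReal = 1 - Real.exp (-t)) ∧
      iIndepFun (m := fun _ : ℕ => (inferInstance : MeasurableSpace ℝ)) Φ μ :=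
  stmt9_general μ Φ hmeas heq
end

section
/- Let (ν_l) be probability measures on (X,𝒜), and R_l : X → 𝔈, R'_l : X → 𝔈' Borel maps into compact metric spaces. Suppose (R_l, R'_l) converges in distribution under ν_l to a random element (R, R') of 𝔈 × 𝔈'. Assume there is a π-system ℬ^π generating the Borel σ-algebra of 𝔈 such that Pr[R ∈ ∂E] = 0 for all E ∈ ℬ^π, and whenever Pr[R ∈ E] > 0 the conditional laws satisfy R'_l ⟹ R' under (ν_l) conditioned on {R_l ∈ E}. Then R and R' are independent. -/
/-!
Fix `s` in the π-system and a continuous `g ≥ 0` on `E'`. Weighting the joint laws of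
`(R_l, R'_l)` by `g` of the second coordinate gives finite measures on `E × E'` that still
converge weakly, and `s ×ˢ univ` is a continuity set of the limit, so by the portmanteau theorem
`∫_{R_l ∈ s} g(R'_l) dν_l → ∫_{R ∈ s} g(R') dP`. The left side is
`ν_l(R_l ∈ s) · ∫ g(R'_l) dν_l[|R_l ∈ s]`, whose two factors converge to `P(R ∈ s)` and
`∫ g(R') dP`. Hence the law of `R'` restricted to `{R ∈ s}` is `P(R ∈ s)` times the law of `R'`,
and the π-system extends this product formula to independence.
-/

open MeasureTheory ProbabilityTheory Filter Topology Set
open scoped ENNReal NNReal BoundedContinuousFunction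

namespace MeasureTheory.FiniteMeasure

variable {Ω ι : Type*} {L : Filter ι} [MeasurableSpace Ω] [TopologicalSpace Ω]

theorem tendsto_measure_of_null_frontier_of_tendsto [OpensMeasurableSpace Ω]
    [HasOuterApproxClosed Ω]
    {μ : FiniteMeasure Ω} {μs : ι → FiniteMeasure Ω} (μs_lim : Tendsto μs L (𝓝 μ))
    {A : Set Ω} (A_nullbdry : μ (frontier A) = 0) :
    Tendsto (fun i ↦ μs i A) L (𝓝 (μ A)) := by
  rcases eq_or_ne μ 0 with rfl | hμ
  · have hmass := μs_lim.mass
    rw [zero_mass] at hmass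
    simpa using tendsto_of_tendsto_of_tendsto_of_le_of_le tendsto_const_nhds hmass
      (fun _ ↦ zero_le) fun i ↦ apply_le_mass (μs i) A
  · have : Nonempty Ω := by
      by_contra h
      rw [not_nonempty_iff] at h
      exact hμ (Subtype.ext (Measure.eq_zero_of_isEmpty _))
    simp_rw [self_eq_mass_mul_normalize _ A]
    refine μs_lim.mass.mul (ProbabilityMeasure.tendsto_measure_of_null_frontier_of_tendsto
      (tendsto_normalize_of_tendsto μs_lim hμ) ?_)
    rw [normalize_eq_of_nonzero _ hμ, A_nullbdry, mul_zero]

noncomputable def withDensity (μ : FiniteMeasure Ω) (g : Ω →ᵇ ℝ≥0) : FiniteMeasure Ω :=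
  ⟨(μ : Measure Ω).withDensity (fun x ↦ g x),
    isFiniteMeasure_withDensity (BoundedContinuousFunction.lintegral_lt_top_of_nnreal _ g).ne⟩

@[simp]
theorem toMeasure_withDensity (μ : FiniteMeasure Ω) (g : Ω →ᵇ ℝ≥0) :
    (μ.withDensity g : Measure Ω) = (μ : Measure Ω).withDensity (fun x ↦ g x) := rfl

theorem tendsto_withDensity [OpensMeasurableSpace Ω] {μ : FiniteMeasure Ω}
    {μs : ι → FiniteMeasure Ω} (μs_lim : Tendsto μs L (𝓝 μ)) (g : Ω →ᵇ ℝ≥0) :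
    Tendsto (fun i ↦ (μs i).withDensity g) L (𝓝 (μ.withDensity g)) := by
  rw [tendsto_iff_forall_lintegral_tendsto] at μs_lim ⊢
  intro f
  simpa only [toMeasure_withDensity, lintegral_withDensity_eq_lintegral_mul _
    g.measurable_coe_ennreal_comp f.measurable_coe_ennreal_comp, Pi.mul_apply,
    BoundedContinuousFunction.coe_mul, ENNReal.coe_mul] using μs_lim (g * f)

theorem tendsto_setLIntegral_of_null_frontier_of_tendsto [OpensMeasurableSpace Ω]
    [HasOuterApproxClosed Ω]
    {μ : FiniteMeasure Ω} {μs : ι → FiniteMeasure Ω} (μs_lim : Tendsto μs L (𝓝 μ))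
    (g : Ω →ᵇ ℝ≥0) {A : Set Ω} (A_nullbdry : (μ : Measure Ω) (frontier A) = 0) :
    Tendsto (fun i ↦ ∫⁻ x in A, g x ∂(μs i : Measure Ω)) L
      (𝓝 (∫⁻ x in A, g x ∂(μ : Measure Ω))) := by
  have hbdry : μ.withDensity g (frontier A) = 0 := by
    rw [← ENNReal.coe_eq_zero, ennreal_coeFn_eq_coeFn_toMeasure, toMeasure_withDensity]
    exact withDensity_absolutelyContinuous _ _ A_nullbdry
  have := ENNReal.tendsto_coe.mpr
    (tendsto_measure_of_null_frontier_of_tendsto (tendsto_withDensity μs_lim g) hbdry)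
  simpa only [ennreal_coeFn_eq_coeFn_toMeasure, toMeasure_withDensity, withDensity_apply']
    using this

end MeasureTheory.FiniteMeasure

theorem MeasureTheory.ProbabilityMeasure.tendsto_of_forall_continuousMap_integral_tendsto
    {Ω ι : Type*} {L : Filter ι} [MeasurableSpace Ω] [TopologicalSpace Ω]
    [OpensMeasurableSpace Ω] [CompactSpace Ω] {μ : ProbabilityMeasure Ω}
    {μs : ι → ProbabilityMeasure Ω}
    (h : ∀ f : C(Ω, ℝ), Tendsto (fun i ↦ ∫ x, f x ∂(μs i : Measure Ω)) L
      (𝓝 (∫ x, f x ∂(μ : Measure Ω)))) :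
    Tendsto μs L (𝓝 μ) :=
  ProbabilityMeasure.tendsto_iff_forall_integral_tendsto.mpr fun f ↦ h f.toContinuousMap

theorem ProbabilityTheory.setLIntegral_eq_measure_mul_lintegral_cond {Ω : Type*}
    [MeasurableSpace Ω] (μ : Measure Ω) [IsFiniteMeasure μ] (s : Set Ω) (f : Ω → ℝ≥0∞) :
    ∫⁻ x in s, f x ∂μ = μ s * ∫⁻ x, f x ∂μ[|s] := by
  rcases eq_or_ne (μ s) 0 with hs | hs
  · simp [Measure.restrict_eq_zero.mpr hs, hs]
  · rw [ProbabilityTheory.cond, lintegral_smul_measure, smul_eq_mul, ← mul_assoc,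
      ENNReal.mul_inv_cancel hs (measure_ne_top μ s), one_mul]

theorem BoundedContinuousFunction.lintegral_comp_eq_ofReal_integral {Y E : Type*}
    [MeasurableSpace Y] [TopologicalSpace E] [MeasurableSpace E] [OpensMeasurableSpace E]
    {μ : Measure Y} [IsFiniteMeasure μ] (g : E →ᵇ ℝ≥0) {f : Y → E} (hf : Measurable f) :
    ∫⁻ y, g (f y) ∂μ = ENNReal.ofReal (∫ y, (g (f y) : ℝ) ∂μ) :=
  lintegral_coe_eq_integral _ ((g.integrable_of_nnreal (μ.map f)).comp_measurable hf)

theorem measure_inter_preimage_eq_mul_of_forall_setLIntegral_eq {Ω E : Type*}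
    [MeasurableSpace Ω] [TopologicalSpace E] [MeasurableSpace E] [BorelSpace E]
    [HasOuterApproxClosed E] {P : Measure Ω} [IsFiniteMeasure P] {R : Ω → E}
    (hR : Measurable R) {S : Set Ω}
    (h : ∀ g : E →ᵇ ℝ≥0, ∫⁻ ω in S, g (R ω) ∂P = P S * ∫⁻ ω, g (R ω) ∂P)
    {t : Set E} (ht : MeasurableSet t) :
    P (S ∩ R ⁻¹' t) = P S * P (R ⁻¹' t) := by
  have hlaw : (P.restrict S).map R = P S • P.map R :=
    ext_of_forall_lintegral_eq_of_IsFiniteMeasure fun g ↦ by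
      rw [lintegral_map g.measurable_coe_ennreal_comp hR, lintegral_smul_measure,
        lintegral_map g.measurable_coe_ennreal_comp hR, h g, smul_eq_mul]
  simpa [Measure.map_apply hR ht, Measure.restrict_apply (hR ht), inter_comm]
    using congr($hlaw t)

theorem indepFun_of_isPiSystem_of_measure_inter_preimage_eq_mul {Ω E E' : Type*}
    [MeasurableSpace Ω] [mE : MeasurableSpace E] [MeasurableSpace E'] {P : Measure Ω}
    [IsZeroOrProbabilityMeasure P]
    {R : Ω → E} {R' : Ω → E'} (hR : Measurable R) (hR' : Measurable R')
    {C : Set (Set E)} (hC : IsPiSystem C) (hgen : MeasurableSpace.generateFrom C = mE)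
    (h : ∀ s ∈ C, ∀ t, MeasurableSet t → P (R ⁻¹' s ∩ R' ⁻¹' t) = P (R ⁻¹' s) * P (R' ⁻¹' t)) :
    IndepFun R R' P := by
  refine IndepSets.indep hR.comap_le hR'.comap_le (hC.comap R)
    (@MeasurableSpace.isPiSystem_measurableSet Ω (.comap R' inferInstance))
    (by rw [← hgen, MeasurableSpace.comap_generateFrom]; rfl)
    (@MeasurableSpace.generateFrom_measurableSet Ω (.comap R' inferInstance)).symm ?_
  rw [IndepSets_iff]
  rintro _ _ ⟨s, hs, rfl⟩ ⟨t, ht, rfl⟩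
  exact h s hs t ht

section LimitLaws

variable {X Ω E E' : Type*} [MeasurableSpace X] [MeasurableSpace Ω]
  [MetricSpace E] [CompactSpace E] [MeasurableSpace E] [BorelSpace E]
  [MetricSpace E'] [CompactSpace E'] [MeasurableSpace E'] [BorelSpace E']
  {P : Measure Ω} [IsProbabilityMeasure P] {ν : ℕ → Measure X}
  {Rl : ℕ → X → E} {R'l : ℕ → X → E'} {R : Ω → E} {R' : Ω → E'}

theorem tendsto_setLIntegral_preimage_of_tendsto_integral
    (hν : ∀ l, IsProbabilityMeasure (ν l))
    (hRl : ∀ l, Measurable (Rl l)) (hR'l : ∀ l, Measurable (R'l l))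
    (hR : Measurable R) (hR' : Measurable R')
    (hconv : ∀ f : C(E × E', ℝ),
      Tendsto (fun l ↦ ∫ x, f (Rl l x, R'l l x) ∂(ν l)) atTop (𝓝 (∫ ω, f (R ω, R' ω) ∂P)))
    {s : Set E} (hs : MeasurableSet s) (hbdry : P (R ⁻¹' frontier s) = 0) (g : E' →ᵇ ℝ≥0) :
    Tendsto (fun l ↦ ∫⁻ x in Rl l ⁻¹' s, g (R'l l x) ∂(ν l)) atTop
      (𝓝 (∫⁻ ω in R ⁻¹' s, g (R' ω) ∂P)) := by
  have hRRl : ∀ l, Measurable fun x ↦ (Rl l x, R'l l x) := fun l ↦ (hRl l).prodMk (hR'l l)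
  have hRR : Measurable fun ω ↦ (R ω, R' ω) := hR.prodMk hR'
  set μs : ℕ → ProbabilityMeasure (E × E') := fun l ↦
    ProbabilityMeasure.map ⟨ν l, hν l⟩ (hRRl l).aemeasurable
  set μ : ProbabilityMeasure (E × E') := ProbabilityMeasure.map ⟨P, ‹_›⟩ hRR.aemeasurable
  have hμs : ∀ l, (μs l : Measure (E × E')) = (ν l).map fun x ↦ (Rl l x, R'l l x) :=
    fun _ ↦ rfl
  have hμ : (μ : Measure (E × E')) = P.map fun ω ↦ (R ω, R' ω) := rfl
  have hlaw : Tendsto μs atTop (𝓝 μ) :=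
    ProbabilityMeasure.tendsto_of_forall_continuousMap_integral_tendsto fun f ↦ by
      simpa [hμs, hμ, integral_map (hRRl _).aemeasurable f.continuous.aestronglyMeasurable,
        integral_map hRR.aemeasurable f.continuous.aestronglyMeasurable] using hconv f
  have hprod : MeasurableSet (s ×ˢ (univ : Set E')) := hs.prod MeasurableSet.univ
  have hg : Measurable fun p : E × E' ↦ (g p.2 : ℝ≥0∞) :=
    g.measurable_coe_ennreal_comp.comp measurable_snd
  have key := FiniteMeasure.tendsto_setLIntegral_of_null_frontier_of_tendsto
    ((ProbabilityMeasure.tendsto_nhds_iff_toFiniteMeasure_tendsto_nhds _).mp hlaw)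
    (g.compContinuous ⟨Prod.snd, continuous_snd⟩) (A := s ×ˢ univ) (by
      simpa [hμ, frontier_prod_univ_eq, Measure.map_apply hRR
        (isClosed_frontier.measurableSet.prod MeasurableSet.univ), mk_preimage_prod] using hbdry)
  simp only [Function.comp_apply, ProbabilityMeasure.toMeasure_comp_toFiniteMeasure_eq_toMeasure,
    hμs, hμ] at key
  simpa [setLIntegral_map hprod hg (hRRl _), setLIntegral_map hprod hg hRR, mk_preimage_prod]
    using key

theorem setLIntegral_preimage_eq_mul_lintegral_of_tendsto_cond
    (hν : ∀ l, IsProbabilityMeasure (ν l))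
    (hRl : ∀ l, Measurable (Rl l)) (hR'l : ∀ l, Measurable (R'l l))
    (hR : Measurable R) (hR' : Measurable R')
    (hconv : ∀ f : C(E × E', ℝ),
      Tendsto (fun l ↦ ∫ x, f (Rl l x, R'l l x) ∂(ν l)) atTop (𝓝 (∫ ω, f (R ω, R' ω) ∂P)))
    {s : Set E} (hs : MeasurableSet s) (hbdry : P (R ⁻¹' frontier s) = 0)
    (hcond : P (R ⁻¹' s) ≠ 0 → ∀ g : C(E', ℝ),
      Tendsto (fun l ↦ ∫ x, g (R'l l x) ∂((ν l)[|{x | Rl l x ∈ s}])) atTop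
        (𝓝 (∫ ω, g (R' ω) ∂P)))
    (g : E' →ᵇ ℝ≥0) :
    ∫⁻ ω in R ⁻¹' s, g (R' ω) ∂P = P (R ⁻¹' s) * ∫⁻ ω, g (R' ω) ∂P := by
  rcases eq_or_ne (P (R ⁻¹' s)) 0 with h0 | h0
  · rw [Measure.restrict_eq_zero.mpr h0, h0, lintegral_zero_measure, zero_mul]
  have hmass : Tendsto (fun l ↦ ν l (Rl l ⁻¹' s)) atTop (𝓝 (P (R ⁻¹' s))) := by
    simpa using tendsto_setLIntegral_preimage_of_tendsto_integral hν hRl hR'l hR hR' hconv hs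
      hbdry 1
  have hcondlim : Tendsto (fun l ↦ ∫⁻ x, g (R'l l x) ∂((ν l)[|Rl l ⁻¹' s])) atTop
      (𝓝 (∫⁻ ω, g (R' ω) ∂P)) := by
    simp only [g.lintegral_comp_eq_ofReal_integral (hR'l _),
      g.lintegral_comp_eq_ofReal_integral hR']
    exact ENNReal.tendsto_ofReal (hcond h0 ⟨fun y ↦ g y, by fun_prop⟩)
  refine tendsto_nhds_unique
    (tendsto_setLIntegral_preimage_of_tendsto_integral hν hRl hR'l hR hR' hconv hs hbdry g) ?_
  simp_rw [setLIntegral_eq_measure_mul_lintegral_cond]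
  exact ENNReal.Tendsto.mul hmass (.inl h0) hcondlim (.inr (measure_ne_top _ _))

end LimitLaws

/-- Independence of limit variables by conditioning: if `(R_l, R'_l) ⟹ (R, R')` under `ν_l`,
and there is a generating π-system of `R`-continuity sets `E` such that conditioning `ν_l` on
`{R_l ∈ E}` still yields `R'_l ⟹ R'` whenever `Pr[R ∈ E] > 0`, then `R` and `R'` are
independent. -/
theorem stmt10 {X E E' Ω : Type*} [MeasurableSpace X]
    [MetricSpace E] [CompactSpace E] [MeasurableSpace E] [BorelSpace E]
    [MetricSpace E'] [CompactSpace E'] [MeasurableSpace E'] [BorelSpace E']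
    [MeasurableSpace Ω] (P : Measure Ω) [IsProbabilityMeasure P]
    (ν : ℕ → Measure X) (hν : ∀ l, IsProbabilityMeasure (ν l))
    (Rl : ℕ → X → E) (R'l : ℕ → X → E')
    (hRl : ∀ l, Measurable (Rl l)) (hR'l : ∀ l, Measurable (R'l l))
    (R : Ω → E) (R' : Ω → E') (hR : Measurable R) (hR' : Measurable R')
    (hconv : ∀ f : C(E × E', ℝ),
      Tendsto (fun l => ∫ x, f (Rl l x, R'l l x) ∂(ν l)) atTop
        (𝓝 (∫ ω, f (R ω, R' ω) ∂P)))
    (piSys : Set (Set E)) (hπ : IsPiSystem piSys)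
    (hgen : MeasurableSpace.generateFrom piSys = (inferInstance : MeasurableSpace E))
    (hbdry : ∀ s ∈ piSys, P (R ⁻¹' frontier s) = 0)
    (hcond : ∀ s ∈ piSys, P (R ⁻¹' s) ≠ 0 → ∀ g : C(E', ℝ),
      Tendsto (fun l => ∫ x, g (R'l l x) ∂((ν l)[|{x | Rl l x ∈ s}])) atTop
        (𝓝 (∫ ω, g (R' ω) ∂P))) :
    IndepFun R R' P := by
  refine indepFun_of_isPiSystem_of_measure_inter_preimage_eq_mul hR hR' hπ hgen
    fun s hs t ht ↦ ?_
  have hs_meas : MeasurableSet s := hgen.le _ (MeasurableSpace.measurableSet_generateFrom hs)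
  exact measure_inter_preimage_eq_mul_of_forall_setLIntegral_eq hR'
    (setLIntegral_preimage_eq_mul_lintegral_of_tendsto_cond hν hRl hR'l hR hR' hconv hs_meas
      (hbdry s hs) (hcond s hs)) ht
end

section
/- Let (X, 𝒜, μ, T) be a probability preserving system, A' ⊆ A measurable sets of positive measure, and j ≥ 0 an integer. Then μ_A(A' ∩ {T_A^j ≠ T_{A'}^j}) ≤ (j+1) μ_A(A ∖ A'), where T_A and T_{A'} are the first-return maps of A and A' respectively, and μ_A is μ conditioned on A. -/
open MeasureTheory ProbabilityTheory Filter Topology Set ENNReal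

/-- First hitting time of `A` under `T`. -/
noncomputable def hit {X : Type*} (T : X → X) (A : Set X) (x : X) : ℕ :=
  sInf {n : ℕ | 1 ≤ n ∧ T^[n] x ∈ A}

/-- The first entrance map `T_A x := T^{φ_A(x)} x`. -/
noncomputable def ret {X : Type*} (T : X → X) (A : Set X) (x : X) : X :=
  T^[hit T A x] x

section aux

variable {X : Type*} {T : X → X} {A A' : Set X} {x : X}

lemma hit_zero (h : hit T A x = 0) : ∀ n, 1 ≤ n → T^[n] x ∉ A := by
  intro n hn hmem
  have hne : {n : ℕ | 1 ≤ n ∧ T^[n] x ∈ A}.Nonempty := ⟨n, hn, hmem⟩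
  have h2 := Nat.sInf_mem hne
  rw [show sInf {n : ℕ | 1 ≤ n ∧ T^[n] x ∈ A} = hit T A x from rfl, h] at h2
  exact absurd h2.1 (by omega)

lemma hit_pos_mem (h : hit T A x ≠ 0) :
    1 ≤ hit T A x ∧ T^[hit T A x] x ∈ A := by
  rcases Set.eq_empty_or_nonempty {n : ℕ | 1 ≤ n ∧ T^[n] x ∈ A} with he | hne
  · exact absurd (by rw [hit, he, Nat.sInf_empty]) h
  · exact Nat.sInf_mem hne

lemma ret_mem (hx : x ∈ A) : ret T A x ∈ A := by
  by_cases h : hit T A x = 0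
  · rw [ret, h]; exact hx
  · exact (hit_pos_mem h).2

lemma ret_mapsTo : Set.MapsTo (ret T A) A A := fun _ hx => ret_mem hx

lemma ret_iter_mem (hx : x ∈ A) (i : ℕ) : (ret T A)^[i] x ∈ A := by
  induction i with
  | zero => exact hx
  | succ i ih => rw [Function.iterate_succ_apply']; exact ret_mem ih

lemma ret_congr (hsub : A' ⊆ A) (h : ret T A x ∈ A') : ret T A x = ret T A' x := by
  by_cases h0 : hit T A x = 0
  · have hz := hit_zero h0
    have h0' : hit T A' x = 0 := by
      rw [hit]
      have : {n : ℕ | 1 ≤ n ∧ T^[n] x ∈ A'} = ∅ := by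
        ext n; simp only [Set.mem_setOf_eq, Set.mem_empty_iff_false, iff_false, not_and]
        intro hn hmem; exact hz n hn (hsub hmem)
      rw [this, Nat.sInf_empty]
    rw [ret, h0, ret, h0']
  · obtain ⟨h1, hmem⟩ := hit_pos_mem h0
    have hA' : T^[hit T A x] x ∈ A' := h
    have hle : hit T A' x ≤ hit T A x := Nat.sInf_le ⟨h1, hA'⟩
    have hne' : {n : ℕ | 1 ≤ n ∧ T^[n] x ∈ A'}.Nonempty := ⟨hit T A x, h1, hA'⟩
    have hmem' := Nat.sInf_mem hne'
    have hge : hit T A x ≤ hit T A' x :=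
      Nat.sInf_le ⟨hmem'.1, hsub hmem'.2⟩
    rw [ret, ret, le_antisymm hle hge]

lemma ret_iter_congr (hsub : A' ⊆ A) (j : ℕ)
    (h : ∀ i ≤ j, (ret T A)^[i] x ∈ A') :
    (ret T A)^[j] x = (ret T A')^[j] x := by
  induction j with
  | zero => rfl
  | succ j ih =>
    have hIH := ih fun i hi => h i (hi.trans (Nat.le_succ j))
    have hmem : ret T A ((ret T A)^[j] x) ∈ A' := by
      have := h (j + 1) le_rfl
      rwa [Function.iterate_succ_apply'] at this
    rw [Function.iterate_succ_apply', Function.iterate_succ_apply',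
      ret_congr hsub hmem, hIH]

variable [MeasurableSpace X]

lemma measurable_hit (hT : Measurable T) (hA : MeasurableSet A) :
    Measurable (hit T A) := by
  apply measurable_to_countable'
  intro n
  cases n with
  | zero =>
    have : hit T A ⁻¹' {0} = ⋂ m, T^[m + 1] ⁻¹' Aᶜ := by
      ext x
      simp only [Set.mem_preimage, Set.mem_singleton_iff, Set.mem_iInter, Set.mem_compl_iff]
      constructor
      · intro h m; exact hit_zero h (m + 1) (by omega)
      · intro h
        rcases Set.eq_empty_or_nonempty {n : ℕ | 1 ≤ n ∧ T^[n] x ∈ A} with he | hne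
        · rw [hit, he, Nat.sInf_empty]
        · exfalso
          obtain ⟨h1, hmem⟩ := Nat.sInf_mem hne
          have h2 := h (sInf {n : ℕ | 1 ≤ n ∧ T^[n] x ∈ A} - 1)
          rw [Nat.sub_add_cancel h1] at h2
          exact h2 hmem
    rw [this]
    exact MeasurableSet.iInter fun m => (hT.iterate (m + 1)) hA.compl
  | succ n =>
    have : hit T A ⁻¹' {n + 1} =
        (T^[n + 1] ⁻¹' A) ∩ ⋂ m, ⋂ (_ : 1 ≤ m), ⋂ (_ : m ≤ n), T^[m] ⁻¹' Aᶜ := by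
      ext x
      simp only [Set.mem_preimage, Set.mem_singleton_iff, Set.mem_inter_iff, Set.mem_iInter,
        Set.mem_compl_iff]
      constructor
      · intro h
        obtain ⟨h1, hmem⟩ := hit_pos_mem (by omega : hit T A x ≠ 0)
        rw [h] at hmem
        refine ⟨hmem, fun m hm1 hmn hmem' => ?_⟩
        have := Nat.sInf_le (show m ∈ {n : ℕ | 1 ≤ n ∧ T^[n] x ∈ A} from ⟨hm1, hmem'⟩)
        rw [show sInf {n : ℕ | 1 ≤ n ∧ T^[n] x ∈ A} = hit T A x from rfl, h] at this
        omega
      · rintro ⟨hmem, hmin⟩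
        have hle : hit T A x ≤ n + 1 := Nat.sInf_le ⟨by omega, hmem⟩
        have h0 : hit T A x ≠ 0 := by
          intro h0; exact hit_zero h0 (n + 1) (by omega) hmem
        obtain ⟨h1, hmem'⟩ := hit_pos_mem h0
        by_contra hne
        exact hmin (hit T A x) h1 (by omega) hmem'
    rw [this]
    exact ((hT.iterate (n + 1)) hA).inter
      (MeasurableSet.iInter fun m => MeasurableSet.iInter fun _ =>
        MeasurableSet.iInter fun _ => (hT.iterate m) hA.compl)

lemma measurable_ret (hT : Measurable T) (hA : MeasurableSet A) :
    Measurable (ret T A) := by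
  intro B hB
  have : ret T A ⁻¹' B = ⋃ n, (hit T A ⁻¹' {n}) ∩ (T^[n] ⁻¹' B) := by
    ext x
    simp only [Set.mem_preimage, Set.mem_iUnion, Set.mem_inter_iff, Set.mem_singleton_iff]
    constructor
    · intro h; exact ⟨hit T A x, rfl, h⟩
    · rintro ⟨n, rfl, h⟩; exact h
  rw [this]
  exact MeasurableSet.iUnion fun n =>
    ((measurable_hit hT hA) (measurableSet_singleton n)).inter ((hT.iterate n) hB)

lemma ret_measure_le {μ : Measure X} [IsFiniteMeasure μ]
    (hT : MeasurePreserving T μ μ) (hA : MeasurableSet A)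
    {S : Set X} (hS : MeasurableSet S) (hSA : S ⊆ A) :
    μ (A ∩ ret T A ⁻¹' S) ≤ μ S := by
  classical
  set V : ℕ → Set X :=
    fun n => {x | T^[n + 1] x ∈ S ∧ ∀ m, 1 ≤ m → m ≤ n → T^[m] x ∉ A} with hV
  have hVmeas : ∀ n, MeasurableSet (V n) := by
    intro n
    have : V n = (T^[n + 1] ⁻¹' S) ∩ ⋂ m, ⋂ (_ : 1 ≤ m), ⋂ (_ : m ≤ n), T^[m] ⁻¹' Aᶜ := by
      ext x
      simp [hV, Set.mem_iInter]
    rw [this]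
    exact ((hT.measurable.iterate (n + 1)) hS).inter
      (MeasurableSet.iInter fun m => MeasurableSet.iInter fun _ =>
        MeasurableSet.iInter fun _ => (hT.measurable.iterate m) hA.compl)
  have hVsucc : ∀ n, V (n + 1) = T ⁻¹' (V n \ A) := by
    intro n
    ext x
    simp only [hV, Set.mem_preimage, Set.mem_diff, Set.mem_setOf_eq]
    constructor
    · rintro ⟨h1, h2⟩
      refine ⟨⟨by rw [← Function.iterate_succ_apply]; exact h1,
        fun m hm1 hmn => by
          rw [← Function.iterate_succ_apply]; exact h2 (m + 1) (by omega) (by omega)⟩,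
        ?_⟩
      have := h2 1 le_rfl (by omega)
      simpa using this
    · rintro ⟨⟨h1, h2⟩, h3⟩
      refine ⟨by rwa [Function.iterate_succ_apply], fun m hm1 hmn => ?_⟩
      rcases Nat.eq_or_lt_of_le hm1 with h | h
      · simpa [← h] using h3
      · have hh := h2 (m - 1) (by omega) (by omega)
        rw [← Function.iterate_succ_apply] at hh
        have hm : m - 1 + 1 = m := by omega
        rw [Nat.succ_eq_add_one] at hh
        rwa [hm] at hh
  have hstep : ∀ n, μ (V n ∩ A) + μ (V (n + 1)) = μ (V n) := by
    intro n
    rw [hVsucc n, hT.measure_preimage ((hVmeas n).diff hA).nullMeasurableSet]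
    exact measure_inter_add_diff _ hA
  have htel : ∀ N, ∑ n ∈ Finset.range N, μ (V n ∩ A) + μ (V N) = μ (V 0) := by
    intro N
    induction N with
    | zero => simp
    | succ N ih =>
      rw [Finset.sum_range_succ, add_assoc, hstep N, ih]
  have hV0 : μ (V 0) = μ S := by
    have : V 0 = T ⁻¹' S := by
      ext x; simp only [hV, Set.mem_setOf_eq, Set.mem_preimage]
      constructor
      · rintro ⟨h, -⟩; simpa using h
      · intro h; exact ⟨by simpa using h, fun m hm1 hmn => by omega⟩
    rw [this, hT.measure_preimage hS.nullMeasurableSet]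
  have hsum : ∑' n, μ (V n ∩ A) ≤ μ S := by
    rw [ENNReal.tsum_eq_iSup_sum' (fun N => Finset.range N)
      (fun t => ⟨t.sup id + 1, fun x hx =>
        Finset.mem_range.2 (Nat.lt_succ_of_le (Finset.le_sup (f := id) hx))⟩)]
    refine iSup_le fun N => ?_
    calc ∑ n ∈ Finset.range N, μ (V n ∩ A)
        ≤ ∑ n ∈ Finset.range N, μ (V n ∩ A) + μ (V N) := le_self_add
      _ = μ (V 0) := htel N
      _ = μ S := hV0
  have hnull : μ (A ∩ {x | hit T A x = 0}) = 0 := by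
    refine measure_mono_null (fun x hx => ?_)
      (hT.conservative.measure_mem_forall_ge_image_notMem_eq_zero
        hA.nullMeasurableSet 1)
    exact ⟨hx.1, fun m hm => hit_zero hx.2 m hm⟩
  have hcover : A ∩ ret T A ⁻¹' S ⊆ (A ∩ {x | hit T A x = 0}) ∪ ⋃ n, (V n ∩ A) := by
    rintro x ⟨hxA, hxS⟩
    by_cases h0 : hit T A x = 0
    · exact Or.inl ⟨hxA, h0⟩
    · refine Or.inr (Set.mem_iUnion.2 ⟨hit T A x - 1, ⟨?_, ?_⟩, hxA⟩)
      · rw [Nat.sub_add_cancel (by omega)]; exact hxS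
      · intro m hm1 hmn hmem
        have := Nat.sInf_le (show m ∈ {n : ℕ | 1 ≤ n ∧ T^[n] x ∈ A} from ⟨hm1, hmem⟩)
        rw [show sInf {n : ℕ | 1 ≤ n ∧ T^[n] x ∈ A} = hit T A x from rfl] at this
        omega
  calc μ (A ∩ ret T A ⁻¹' S)
      ≤ μ ((A ∩ {x | hit T A x = 0}) ∪ ⋃ n, (V n ∩ A)) := measure_mono hcover
    _ ≤ μ (A ∩ {x | hit T A x = 0}) + μ (⋃ n, (V n ∩ A)) := measure_union_le _ _
    _ ≤ 0 + ∑' n, μ (V n ∩ A) :=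
        add_le_add hnull.le (measure_iUnion_le _)
    _ ≤ μ S := by rw [zero_add]; exact hsum

lemma ret_iter_measure_le {μ : Measure X} [IsFiniteMeasure μ]
    (hT : MeasurePreserving T μ μ) (hA : MeasurableSet A)
    {S : Set X} (hS : MeasurableSet S) (hSA : S ⊆ A) (i : ℕ) :
    μ (A ∩ (ret T A)^[i] ⁻¹' S) ≤ μ S := by
  induction i with
  | zero => exact measure_mono Set.inter_subset_right
  | succ i ih =>
    have heq : A ∩ (ret T A)^[i + 1] ⁻¹' S
        = A ∩ ret T A ⁻¹' (A ∩ (ret T A)^[i] ⁻¹' S) := by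
      ext x
      simp only [Set.mem_inter_iff, Set.mem_preimage, Function.iterate_succ_apply]
      constructor
      · rintro ⟨hxA, hxS⟩; exact ⟨hxA, ret_mem hxA, hxS⟩
      · rintro ⟨hxA, -, hxS⟩; exact ⟨hxA, hxS⟩
    rw [heq]
    exact (ret_measure_le hT hA
      (hA.inter (((measurable_ret hT.measurable hA).iterate i) hS))
      Set.inter_subset_left).trans ih

end aux

/-- For `A' ⊆ A` of positive measure, the conditional measure of the set of points of `A'`
where the `j`-th iterates of the first return maps of `A` and `A'` differ is at most
`(j+1) μ_A(A ∖ A')`. -/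
theorem stmt11 {X : Type*} [MeasurableSpace X] (μ : Measure X) [IsProbabilityMeasure μ]
    (T : X → X) (hT : MeasurePreserving T μ μ)
    (A A' : Set X) (hA : MeasurableSet A) (hA' : MeasurableSet A') (hsub : A' ⊆ A)
    (hApos : 0 < μ A) (hA'pos : 0 < μ A') (j : ℕ) :
    (μ[|A]) (A' ∩ {x | (ret T A)^[j] x ≠ (ret T A')^[j] x})
      ≤ (j + 1 : ℝ≥0∞) * (μ[|A]) (A \ A') := by
  have hSm : MeasurableSet (A \ A') := hA.diff hA'
  have hSA : A \ A' ⊆ A := Set.diff_subset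
  have hcover : A ∩ (A' ∩ {x | (ret T A)^[j] x ≠ (ret T A')^[j] x})
      ⊆ ⋃ i ∈ Finset.range (j + 1), A ∩ (ret T A)^[i] ⁻¹' (A \ A') := by
    rintro x ⟨hxA, hxA', hxne⟩
    by_contra hcon
    apply hxne
    apply ret_iter_congr hsub j
    intro i hi
    by_contra hni
    exact hcon (Set.mem_biUnion (Finset.mem_range.2 (by omega))
      ⟨hxA, ret_iter_mem (hsub hxA') i, hni⟩)
  rw [cond_apply hA, cond_apply hA,
    Set.inter_eq_self_of_subset_right (Set.diff_subset : A \ A' ⊆ A)]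
  calc (μ A)⁻¹ * μ (A ∩ (A' ∩ {x | (ret T A)^[j] x ≠ (ret T A')^[j] x}))
      ≤ (μ A)⁻¹ * μ (⋃ i ∈ Finset.range (j + 1), A ∩ (ret T A)^[i] ⁻¹' (A \ A')) :=
        mul_le_mul_right (measure_mono hcover) _
    _ ≤ (μ A)⁻¹ * ∑ i ∈ Finset.range (j + 1), μ (A ∩ (ret T A)^[i] ⁻¹' (A \ A')) :=
        mul_le_mul_right (measure_biUnion_finset_le _ _) _
    _ ≤ (μ A)⁻¹ * ∑ i ∈ Finset.range (j + 1), μ (A \ A') :=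
        mul_le_mul_right (Finset.sum_le_sum fun i _ =>
          ret_iter_measure_le hT hA hSm hSA i) _
    _ = (j + 1 : ℝ≥0∞) * ((μ A)⁻¹ * μ (A \ A')) := by
        rw [Finset.sum_const, Finset.card_range, nsmul_eq_mul]
        push_cast
        ring
end

section
/- Let 𝔘 be a uniformly integrable set of probability densities in L¹(μ) on a probability space. Then there exists η > 0 such that μ(u > 2η) > 2η for every u ∈ 𝔘. Consequently, for any probability density v with L¹-distance to 𝔘 less than η², one has μ(v > η) > η. -/
/-!
Uniform integrability gives a level `M ≥ 1` above which every `u ∈ 𝔘` carries mass `< 1/2`, so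
at least mass `1/2` lies in `{u ≤ M}`. Splitting further at height `2η`, that mass is at most
`M μ(u > 2η) + 2η`, which forces `μ(u > 2η) > 2η` for `η = 1/(8M)`. For `v` close to some `u` in
`L¹`, Markov's inequality bounds the measure of `{|u - v| ≥ η}`, and outside that set
`u > 2η` implies `v > η`.
-/

open MeasureTheory Set

section

variable {X : Type*} [MeasurableSpace X] {μ : Measure X}

theorem setIntegral_superlevelSet_le_of_le {u : X → ℝ} (hu : Integrable u μ) (hnn : 0 ≤ u)
    {M M' : ℝ} (hMM' : M ≤ M') :
    ∫ x in {x | M' < u x}, u x ∂μ ≤ ∫ x in {x | M < u x}, u x ∂μ :=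
  setIntegral_mono_set hu.integrableOn (.of_forall hnn)
    (.of_forall fun _ hx => hMM'.trans_lt hx)

theorem integral_le_setIntegral_lt_add_mul_measureReal_add [IsFiniteMeasure μ] {u : X → ℝ}
    (hum : Measurable u) (hu : Integrable u μ) {M t : ℝ} (hM : 0 ≤ M) (ht : 0 ≤ t) :
    ∫ x, u x ∂μ ≤ ∫ x in {x | M < u x}, u x ∂μ + M * μ.real {x | t < u x} + t * μ.real univ := by
  have hMset : MeasurableSet {x | M < u x} := measurableSet_lt measurable_const hum
  have htset : MeasurableSet {x | t < u x} := measurableSet_lt measurable_const hum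
  have hpointwise : ∀ x, u x ≤
      {x | M < u x}.indicator u x + {x | t < u x}.indicator (fun _ => M) x + t := by
    intro x
    by_cases hxM : M < u x <;> by_cases hxt : t < u x <;>
      simp [indicator, hxM, hxt] <;> linarith
  have hA : Integrable ({x | M < u x}.indicator u) μ := hu.indicator hMset
  have hB : Integrable ({x | t < u x}.indicator fun _ => M) μ :=
    (integrable_const M).indicator htset
  calc ∫ x, u x ∂μ
      ≤ ∫ x, ({x | M < u x}.indicator u x + {x | t < u x}.indicator (fun _ => M) x + t) ∂μ :=
        integral_mono hu ((hA.add hB).add (integrable_const t)) hpointwise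
    _ = _ := by
        rw [integral_add (by exact hA.add hB) (integrable_const t), integral_add hA hB,
          integral_indicator hMset, integral_indicator_const M htset, integral_const,
          smul_eq_mul, smul_eq_mul, mul_comm M, mul_comm t]

theorem exists_pos_lt_measureReal_lt_of_uniformIntegrable [IsProbabilityMeasure μ]
    {U : Set (X → ℝ)}
    (hdens : ∀ u ∈ U, Measurable u ∧ 0 ≤ u ∧ Integrable u μ ∧ ∫ x, u x ∂μ = 1)
    (hui : ∀ ε > (0 : ℝ), ∃ M : ℝ, ∀ u ∈ U, ∫ x in {x | M < u x}, u x ∂μ < ε) :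
    ∃ η > (0 : ℝ), ∀ u ∈ U, 2 * η < μ.real {x | 2 * η < u x} := by
  obtain ⟨M, hM⟩ := hui (1 / 2) (by norm_num)
  set M' := max M 1
  have hM'1 : 1 ≤ M' := le_max_right M 1
  set η := 1 / (8 * M')
  have h2η : M' * (2 * η) = 1 / 4 := by
    have : M' ≠ 0 := by positivity
    simp only [η]; field_simp; norm_num
  have h2η_le : 2 * η ≤ 1 / 4 := by nlinarith
  refine ⟨η, by positivity, fun u hu => ?_⟩
  obtain ⟨hum, hnn, hint, htot⟩ := hdens u hu
  have htail : ∫ x in {x | M' < u x}, u x ∂μ < 1 / 2 :=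
    (setIntegral_superlevelSet_le_of_le hint hnn (le_max_left M 1)).trans_lt (hM u hu)
  have hsplit := integral_le_setIntegral_lt_add_mul_measureReal_add hum hint
    (by linarith : (0 : ℝ) ≤ M') (by positivity : (0 : ℝ) ≤ 2 * η)
  rw [htot, probReal_univ, mul_one] at hsplit
  by_contra! hsmall
  nlinarith [mul_le_mul_of_nonneg_left hsmall (by linarith : (0 : ℝ) ≤ M')]

theorem mul_measureReal_le_add_integral_abs_sub [IsFiniteMeasure μ] {u v : X → ℝ}
    (hu : Integrable u μ) (hv : Integrable v μ) {η : ℝ} (hη : 0 ≤ η) :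
    η * μ.real {x | 2 * η < u x} ≤ η * μ.real {x | η < v x} + ∫ x, |u x - v x| ∂μ := by
  have hcover : {x | 2 * η < u x} ⊆ {x | η < v x} ∪ {x | η ≤ |u x - v x|} := by
    intro x hx
    by_contra hnot
    simp only [mem_union, mem_ofPred_eq, not_or, not_lt] at hx hnot
    linarith [le_abs_self (u x - v x)]
  have hmarkov : η * μ.real {x | η ≤ |u x - v x|} ≤ ∫ x, |u x - v x| ∂μ :=
    mul_meas_ge_le_integral_of_nonneg (.of_forall fun _ => abs_nonneg _) (hu.sub hv).abs η
  calc η * μ.real {x | 2 * η < u x}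
      ≤ η * (μ.real {x | η < v x} + μ.real {x | η ≤ |u x - v x|}) :=
        mul_le_mul_of_nonneg_left ((measureReal_mono hcover).trans (measureReal_union_le _ _)) hη
    _ ≤ _ := by linarith

end

/-- For a uniformly integrable set `𝔘` of probability densities there is `η > 0` with
`μ(u > 2η) > 2η` for all `u ∈ 𝔘`; consequently `μ(v > η) > η` for every probability density
`v` whose `L¹` distance to `𝔘` is less than `η²`. -/
theorem stmt13 {X : Type*} [MeasurableSpace X] (μ : Measure X) [IsProbabilityMeasure μ]
    (U : Set (X → ℝ))
    (hdens : ∀ u ∈ U, Measurable u ∧ 0 ≤ u ∧ Integrable u μ ∧ ∫ x, u x ∂μ = 1)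
    (hui : ∀ ε > (0 : ℝ), ∃ M : ℝ, ∀ u ∈ U, ∫ x in {x | M < u x}, u x ∂μ < ε) :
    ∃ η > (0 : ℝ),
      (∀ u ∈ U, 2 * η < (μ {x | 2 * η < u x}).toReal) ∧
      ∀ v : X → ℝ, Measurable v → 0 ≤ v → Integrable v μ → ∫ x, v x ∂μ = 1 →
        (∃ u ∈ U, ∫ x, |u x - v x| ∂μ < η ^ 2) →
        η < (μ {x | η < v x}).toReal := by
  obtain ⟨η, hη, hmass⟩ := exists_pos_lt_measureReal_lt_of_uniformIntegrable hdens hui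
  refine ⟨η, hη, hmass, ?_⟩
  rintro v - - hv - ⟨u, hu, hclose⟩
  have hL1 := mul_measureReal_le_add_integral_abs_sub (hdens u hu).2.2.1 hv hη.le
  have hηmass := mul_lt_mul_of_pos_left (hmass u hu) hη
  have hsq : η * η < η * μ.real {x | η < v x} := by nlinarith
  exact lt_of_mul_lt_mul_left hsq hη.le
end
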